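/- arXiv:2101.11507 — 3 statements merged into one kernel-verified Lean document; each statement's English description precedes it below -/
import Mathlib

section
/- Let G be a group and x1, x2, x3, g1, g2, g3 ∈ G. Suppose that all of the following twelve triple commutators are trivial: [x1,x2,x3], [x1g1,x2g2,x3g3], [x1g1,x2g2,x3], [x1g1,x2,x3g2], [x1g1,x2,x3], [x1g1,x2,x3g3], [x1,x2,x3g1], [x1,x2g2,x3g1], [x1,x2g2,x3], [x1,x2,x3g2], [x1,x2g2,x3g3], [x1,x2,x3g3]. Then [g1,g2,g3] = 1. -/
/-- The commutator `[a,b] = a⁻¹ * b⁻¹ * a * b`. -/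
def pcomm {G : Type*} [Group G] (a b : G) : G := a⁻¹ * b⁻¹ * a * b

/-- The triple commutator `[a,b,c] = [[a,b],c]`. -/
def pcomm3 {G : Type*} [Group G] (a b c : G) : G := pcomm (pcomm a b) c

/-- Conjugation `a ^ b = b⁻¹ * a * b`. -/
def pconj {G : Type*} [Group G] (a b : G) : G := b⁻¹ * a * b

lemma pcomm_eq_one_iff {G : Type*} [Group G] {a b : G} : pcomm a b = 1 ↔ Commute a b := by
  unfold pcomm Commute SemiconjBy
  constructor
  · intro h
    have := congrArg (fun t => b * a * t) h
    simpa [mul_assoc] using this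
  · intro h
    rw [mul_assoc, h]
    group

lemma pcomm3_eq_one_iff {G : Type*} [Group G] {a b c : G} :
    pcomm3 a b c = 1 ↔ Commute (pcomm a b) c := by
  unfold pcomm3; exact pcomm_eq_one_iff

lemma pcomm_expand_right {G : Type*} [Group G] (a b c : G) :
    pcomm a (b * c) = pcomm a c * (c⁻¹ * pcomm a b * c) := by
  unfold pcomm; group

lemma pcomm_expand_left {G : Type*} [Group G] (a b c : G) :
    pcomm (a * b) c = (b⁻¹ * pcomm a c * b) * pcomm b c := by
  unfold pcomm; group

theorem twelve_commutator_lemma {G : Type*} [Group G] (x₁ x₂ x₃ g₁ g₂ g₃ : G)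
    (h1 : pcomm3 x₁ x₂ x₃ = 1)
    (h2 : pcomm3 (x₁ * g₁) (x₂ * g₂) (x₃ * g₃) = 1)
    (h3 : pcomm3 (x₁ * g₁) (x₂ * g₂) x₃ = 1)
    (h4 : pcomm3 (x₁ * g₁) x₂ (x₃ * g₂) = 1)
    (h5 : pcomm3 (x₁ * g₁) x₂ x₃ = 1)
    (h6 : pcomm3 (x₁ * g₁) x₂ (x₃ * g₃) = 1)
    (h7 : pcomm3 x₁ x₂ (x₃ * g₁) = 1)
    (h8 : pcomm3 x₁ (x₂ * g₂) (x₃ * g₁) = 1)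
    (h9 : pcomm3 x₁ (x₂ * g₂) x₃ = 1)
    (h10 : pcomm3 x₁ x₂ (x₃ * g₂) = 1)
    (h11 : pcomm3 x₁ (x₂ * g₂) (x₃ * g₃) = 1)
    (h12 : pcomm3 x₁ x₂ (x₃ * g₃) = 1) :
    pcomm3 g₁ g₂ g₃ = 1 := by
  rw [pcomm3_eq_one_iff] at *
  set u := pcomm x₁ x₂ with hu
  set v := pcomm x₁ (x₂ * g₂) with hv
  set w := pcomm (x₁ * g₁) x₂ with hw
  set z := pcomm (x₁ * g₁) (x₂ * g₂) with hz
  -- peel off x₃ to get commutation with the g's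
  have strip : ∀ {t : G} {g : G}, Commute t x₃ → Commute t (x₃ * g) → Commute t g := by
    intro t g h h'
    have : Commute t (x₃⁻¹ * (x₃ * g)) := (h.inv_right).mul_right h'
    simpa [mul_assoc] using this
  have ug1 : Commute u g₁ := strip h1 h7
  have ug2 : Commute u g₂ := strip h1 h10
  have ug3 : Commute u g₃ := strip h1 h12
  have vg1 : Commute v g₁ := strip h9 h8
  have vg3 : Commute v g₃ := strip h9 h11
  have wg2 : Commute w g₂ := strip h5 h4
  have wg3 : Commute w g₃ := strip h5 h6
  have zg3 : Commute z g₃ := strip h3 h2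
  -- a = [x₁, g₂] = v * u⁻¹
  have conj_u : g₂⁻¹ * u * g₂ = u := by rw [mul_assoc, ug2.eq]; group
  have hveq : v = pcomm x₁ g₂ * u := by
    rw [hv, pcomm_expand_right x₁ x₂ g₂, ← hu, conj_u]
  have ha : pcomm x₁ g₂ = v * u⁻¹ := by rw [hveq]; group
  have ag1 : Commute (pcomm x₁ g₂) g₁ := by rw [ha]; exact vg1.mul_left ug1.inv_left
  have ag3 : Commute (pcomm x₁ g₂) g₃ := by rw [ha]; exact vg3.mul_left ug3.inv_left
  -- z = a * [g₁,g₂] * w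
  have conj_w : g₂⁻¹ * w * g₂ = w := by rw [mul_assoc, wg2.eq]; group
  have conj_a : g₁⁻¹ * pcomm x₁ g₂ * g₁ = pcomm x₁ g₂ := by rw [mul_assoc, ag1.eq]; group
  have hzeq : z = pcomm x₁ g₂ * pcomm g₁ g₂ * w := by
    rw [hz, pcomm_expand_right (x₁ * g₁) x₂ g₂, pcomm_expand_left x₁ g₁ g₂, ← hw, conj_w, conj_a]
  have hgg : pcomm g₁ g₂ = (pcomm x₁ g₂)⁻¹ * z * w⁻¹ := by rw [hzeq]; group
  rw [hgg]
  exact (ag3.inv_left.mul_left zg3).mul_left wg3.inv_left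
end

section
/- Let G be a group and x1, x2, x3, g1, g2 ∈ G. If [x1,x2g2,x3g1] = 1, [x1,x2g2,x3] = 1, [x1,x2,x3] = 1, [x1,x2,x3g2] = 1, and [x1,x2,x3g1] = 1, then [x1,g2,g1] = 1. -/
lemma pcomm_one_iff {G : Type*} [Group G] (a b : G) : pcomm a b = 1 ↔ a * b = b * a := by
  unfold pcomm
  constructor
  · intro h
    calc a * b = b * a * (a⁻¹ * b⁻¹ * a * b) := by group
    _ = b * a * 1 := by rw [h]
    _ = b * a := by group
  · intro h
    have : a⁻¹ * b⁻¹ * (a * b) = a⁻¹ * b⁻¹ * (b * a) := by rw [h]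
    calc a⁻¹ * b⁻¹ * a * b = a⁻¹ * b⁻¹ * (a * b) := by group
    _ = a⁻¹ * b⁻¹ * (b * a) := this
    _ = 1 := by group

lemma comm_cancel {G : Type*} [Group G] {u x y : G}
    (h1 : u * x = x * u) (h2 : u * (x * y) = x * y * u) : u * y = y * u := by
  have : x * (u * y) = x * (y * u) := by
    calc x * (u * y) = (u * x) * y * u * u⁻¹ := by rw [h1]; group
    _ = (x * y * u) * u * u⁻¹ := by rw [← h2]; group
    _ = x * (y * u) := by group
  exact mul_left_cancel this

theorem step_II {G : Type*} [Group G] (x₁ x₂ x₃ g₁ g₂ : G)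
    (h8 : pcomm3 x₁ (x₂ * g₂) (x₃ * g₁) = 1)
    (h9 : pcomm3 x₁ (x₂ * g₂) x₃ = 1)
    (h1 : pcomm3 x₁ x₂ x₃ = 1)
    (h10 : pcomm3 x₁ x₂ (x₃ * g₂) = 1)
    (h7 : pcomm3 x₁ x₂ (x₃ * g₁) = 1) :
    pcomm3 x₁ g₂ g₁ = 1 := by
  set u := pcomm x₁ x₂ with hu
  set v := pcomm x₁ g₂ with hv
  set w := pcomm x₁ (x₂ * g₂) with hw
  rw [pcomm3, pcomm_one_iff] at h8 h9 h1 h10 h7 ⊢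
  -- u commutes with g₁ and g₂
  have hug1 : u * g₁ = g₁ * u := comm_cancel h1 h7
  have hug2 : u * g₂ = g₂ * u := comm_cancel h1 h10
  -- w commutes with g₁
  have hwg1 : w * g₁ = g₁ * w := comm_cancel h9 h8
  -- w = v * u
  have hwvu : w = v * u := by
    rw [hw, hv, hu, pcomm, pcomm, pcomm]
    have : x₁⁻¹ * x₂⁻¹ * x₁ * x₂ * g₂ = g₂ * (x₁⁻¹ * x₂⁻¹ * x₁ * x₂) := by
      rw [← pcomm, ← hu]; exact hug2
    calc x₁⁻¹ * (x₂ * g₂)⁻¹ * x₁ * (x₂ * g₂)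
        = x₁⁻¹ * g₂⁻¹ * x₁ * g₂ * (g₂⁻¹ * (x₁⁻¹ * x₂⁻¹ * x₁ * x₂ * g₂)) := by group
    _ = x₁⁻¹ * g₂⁻¹ * x₁ * g₂ * (g₂⁻¹ * (g₂ * (x₁⁻¹ * x₂⁻¹ * x₁ * x₂))) := by rw [this]
    _ = x₁⁻¹ * g₂⁻¹ * x₁ * g₂ * (x₁⁻¹ * x₂⁻¹ * x₁ * x₂) := by group
  -- hence v commutes with g₁
  rw [hwvu] at hwg1
  have hvg1 : v * g₁ = g₁ * v := by
    have key : v * g₁ * u = g₁ * v * u := by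
      calc v * g₁ * u = v * (g₁ * u) := by group
      _ = v * (u * g₁) := by rw [hug1]
      _ = v * u * g₁ := by group
      _ = g₁ * (v * u) := hwg1
      _ = g₁ * v * u := by group
    exact mul_right_cancel key
  rw [hv] at hvg1
  exact hvg1
end

section
/- Let G be a compact (Hausdorff) topological group with normalized Haar measure m, and let A ⊆ G be a measurable subset with m(A) > 0. Then for every positive integer k there exists an open neighborhood U of the identity in G such that for all u1, …, uk ∈ U, the set A ∩ Au1 ∩ ⋯ ∩ Auk has positive Haar measure. -/
open MeasureTheory Set

/-!
On a compact group Haar measure is also right invariant, so right translation is continuous in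
measure: `m (Au ∆ A) → 0` as `u → 1`. On a neighbourhood `U` of `1` each `A \ Au` then has measure
below `m A / (k + 1)`, and the `k` sets `A \ A uᵢ` are too small to cover `A` up to a null set.
-/

open Filter Measure
open scoped ENNReal symmDiff Topology

theorem measure_le_measure_inter_iInter_add_sum {α ι : Type*} [MeasurableSpace α] [Fintype ι]
    (μ : Measure α) (A : Set α) (B : ι → Set α) :
    μ A ≤ μ (A ∩ ⋂ i, B i) + ∑ i, μ (A \ B i) := by
  have hcover : A ⊆ (A ∩ ⋂ i, B i) ∪ ⋃ i, A \ B i := by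
    intro x hx
    by_cases h : ∀ i, x ∈ B i
    · exact Or.inl ⟨hx, mem_iInter.2 h⟩
    · obtain ⟨i, hi⟩ := not_forall.1 h
      exact Or.inr (mem_iUnion.2 ⟨i, hx, hi⟩)
  calc μ A ≤ μ ((A ∩ ⋂ i, B i) ∪ ⋃ i, A \ B i) := measure_mono hcover
    _ ≤ μ (A ∩ ⋂ i, B i) + μ (⋃ i, A \ B i) := measure_union_le _ _
    _ ≤ μ (A ∩ ⋂ i, B i) + ∑ i, μ (A \ B i) := by gcongr; exact measure_iUnion_fintype_le _ _

theorem isMulRightInvariant_of_compactSpace {G : Type*} [Group G] [TopologicalSpace G]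
    [IsTopologicalGroup G] [CompactSpace G] [MeasurableSpace G] [BorelSpace G]
    (μ : Measure G) [IsHaarMeasure μ] : IsMulRightInvariant μ := by
  refine ⟨fun g => ?_⟩
  have hsmul := isMulInvariant_eq_smul_of_compactSpace (μ.map (· * g)) μ
  have huniv : μ.map (· * g) univ = μ univ := by
    rw [map_apply (measurable_mul_const g) .univ, preimage_univ]
  -- right translation preserves the total mass, which pins the scalar factor to `1`
  have hc : (haarScalarFactor (μ.map (· * g)) μ : ℝ≥0∞) = 1 := by
    rw [hsmul, Measure.smul_apply, ENNReal.smul_def, smul_eq_mul] at huniv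
    exact (ENNReal.mul_eq_right (IsOpenPosMeasure.open_pos _ isOpen_univ univ_nonempty)
      (measure_ne_top _ _)).1 huniv
  rw [hsmul, ENNReal.coe_eq_one.1 hc, one_smul]

theorem tendsto_measure_image_mul_right_symmDiff_nhds_zero {G : Type*} [Group G]
    [TopologicalSpace G] [IsTopologicalGroup G] [MeasurableSpace G] [BorelSpace G]
    {μ : Measure G} [μ.InnerRegularCompactLTTop] [IsLocallyFiniteMeasure μ]
    [IsMulRightInvariant μ] {A : Set G} (hA : NullMeasurableSet A μ) (hμA : μ A ≠ ∞) :
    Tendsto (fun u => μ (((· * u) '' A) ∆ A)) (𝓝 1) (𝓝 0) := by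
  let f : C(G, C(G, G)) := ContinuousMap.curry ⟨fun p : G × G => p.2 * p.1⁻¹, by fun_prop⟩
  have hf : ∀ u, MeasurePreserving (f u) μ μ := fun u => measurePreserving_mul_right μ u⁻¹
  have := tendsto_measure_symmDiff_preimage_nhds_zero (f.continuous.tendsto 1)
    (.of_forall hf) (hf 1) hA hμA
  refine this.congr fun u => ?_
  congr 1
  ext x
  simp only [mem_symmDiff, mem_preimage, f, ContinuousMap.curry_apply, ContinuousMap.coe_mk,
    image_mul_right, inv_one, mul_one]

theorem translates_positive_measure_general {G : Type*} [Group G] [TopologicalSpace G]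
    [IsTopologicalGroup G] [CompactSpace G]
    [MeasurableSpace G] [BorelSpace G]
    (A : Set G) (hA : MeasurableSet A) (hpos : 0 < Measure.haar A)
    (k : ℕ) :
    ∃ U : Set G, IsOpen U ∧ (1 : G) ∈ U ∧
      ∀ u : Fin k → G, (∀ i, u i ∈ U) →
        0 < Measure.haar (A ∩ ⋂ i, (· * u i) '' A) := by
  have : IsMulRightInvariant (haar : Measure G) := isMulRightInvariant_of_compactSpace haar
  have hfin : haar A ≠ ∞ := measure_ne_top _ _
  set ε := haar A / (k + 1)
  have hε : 0 < ε := ENNReal.div_pos hpos.ne' (by simp)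
  have hsmall : ∀ᶠ u in 𝓝 (1 : G), haar (A \ (· * u) '' A) < ε := by
    filter_upwards [(tendsto_measure_image_mul_right_symmDiff_nhds_zero hA.nullMeasurableSet
      hfin).eventually (gt_mem_nhds hε)] with u hu
    exact (measure_mono fun x hx => Or.inr hx).trans_lt hu
  obtain ⟨U, hU, hUopen, hU1⟩ := eventually_nhds_iff.1 hsmall
  refine ⟨U, hUopen, hU1, fun u hu => pos_of_ne_zero fun h0 => ?_⟩
  refine (measure_le_measure_inter_iInter_add_sum haar A fun i => (· * u i) '' A).not_gt ?_
  calc haar (A ∩ ⋂ i, (· * u i) '' A) + ∑ i, haar (A \ (· * u i) '' A)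
      ≤ ∑ _i : Fin k, ε := by
        rw [h0, zero_add]
        exact Finset.sum_le_sum fun i _ => (hU _ (hu i)).le
    _ = k * ε := by simp
    _ < (k + 1) * ε :=
        ENNReal.mul_lt_mul_left hε.ne' (ENNReal.div_lt_top hfin (by simp)).ne
          (ENNReal.lt_add_right (ENNReal.natCast_ne_top k) one_ne_zero)
    _ = haar A := ENNReal.mul_div_cancel (by simp) (by simp)

theorem translates_positive_measure {G : Type*} [Group G] [TopologicalSpace G]
    [IsTopologicalGroup G] [CompactSpace G] [T2Space G]
    [MeasurableSpace G] [BorelSpace G]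
    (A : Set G) (hA : MeasurableSet A) (hpos : 0 < Measure.haar A)
    (k : ℕ) (hk : 0 < k) :
    ∃ U : Set G, IsOpen U ∧ (1 : G) ∈ U ∧
      ∀ u : Fin k → G, (∀ i, u i ∈ U) →
        0 < Measure.haar (A ∩ ⋂ i, (· * u i) '' A) :=
  translates_positive_measure_general A hA hpos k
end
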